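/- arXiv:2402.12895 — 6 statements merged into one kernel-verified Lean document; each statement's English description precedes it below -/
import Mathlib

section
/- Every surjection f : {1,…,m} → {1,…,n} admits a unique decomposition f = s ∘ α, where s : {1,…,m} → {1,…,n} is an order-preserving (monotone) surjection and α is a permutation of {1,…,m} whose restriction to each fiber f⁻¹(i) (i = 1,…,n) is strictly increasing. -/
/-!
Writing `σ = α⁻¹`, the conditions on `(s, α)` say exactly that `s = f ∘ σ` is monotone and that
`σ` lists each fiber of `f` in increasing order. These are the conditions characterising the
sorting permutation `Tuple.sort f`, so `σ`, and with it `s`, is unique; surjectivity of `s` is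
inherited from `f`.
-/

open Equiv

theorem Equiv.Perm.forall_lt_imp_lt_iff_strictMonoOn_inv_fibers {α β : Type*} [LinearOrder α]
    (f : α → β) (σ : Perm α) :
    (∀ i j, i < j → f (σ i) = f (σ j) → σ i < σ j) ↔
      ∀ b, StrictMonoOn (⇑σ⁻¹) (f ⁻¹' {b}) := by
  constructor
  · intro h b x hx y hy hxy
    by_contra! hle
    have hlt : σ⁻¹ y < σ⁻¹ x := hle.lt_of_ne (σ⁻¹.injective.ne hxy.ne')
    have := h _ _ hlt (by simp_all)
    simp only [Perm.coe_inv, apply_symm_apply] at this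
    exact this.not_gt hxy
  · intro h i j hij hf
    by_contra! hle
    have hlt : σ j < σ i := hle.lt_of_ne (σ.injective.ne hij.ne')
    have := h (f (σ i)) (by simp [hf]) rfl hlt
    simp only [Perm.coe_inv, symm_apply_apply] at this
    exact this.not_gt hij

theorem Tuple.eq_sort_iff_monotone_strictMonoOn_inv_fibers {m : ℕ} {β : Type*} [LinearOrder β]
    (f : Fin m → β) (σ : Perm (Fin m)) :
    σ = Tuple.sort f ↔ Monotone (f ∘ σ) ∧ ∀ b, StrictMonoOn (⇑σ⁻¹) (f ⁻¹' {b}) := by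
  rw [Tuple.eq_sort_iff, Perm.forall_lt_imp_lt_iff_strictMonoOn_inv_fibers]

/-- Every surjection `f : Fin m → Fin n` admits a unique decomposition
`f = s ∘ α`, where `s` is an order-preserving (monotone) surjection and `α` is a
permutation of `Fin m` whose restriction to each fiber `f ⁻¹' {i}` is strictly
increasing. -/
theorem stmt0 {m n : ℕ} (f : Fin m → Fin n) (hf : Function.Surjective f) :
    ∃! p : (Fin m → Fin n) × Equiv.Perm (Fin m),
      Monotone p.1 ∧ Function.Surjective p.1 ∧
      (∀ i : Fin n, StrictMonoOn (⇑p.2) (f ⁻¹' {i})) ∧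
      f = p.1 ∘ ⇑p.2 := by
  obtain ⟨hmono, hfibers⟩ := (Tuple.eq_sort_iff_monotone_strictMonoOn_inv_fibers f _).mp rfl
  refine ⟨(f ∘ Tuple.sort f, (Tuple.sort f)⁻¹),
    ⟨hmono, hf.comp (Equiv.surjective _), hfibers, ?_⟩, ?_⟩
  · ext x; simp
  · rintro ⟨s, α⟩ ⟨hs_mono, -, hα_fibers, hcomp⟩
    have hs : f ∘ ⇑α⁻¹ = s := by rw [hcomp]; ext x; simp
    have hsort : α⁻¹ = Tuple.sort f :=
      (Tuple.eq_sort_iff_monotone_strictMonoOn_inv_fibers f _).mpr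
        ⟨hs ▸ hs_mono, by simpa using hα_fibers⟩
    rw [← hsort, hs, inv_inv]
end

section
/- For all m, n ∈ ℕ, the map proj sending a surjection f : {1,…,m} → {1,…,n} to the multiset of its fiber cardinalities induces a bijection from the set of orbits of Surj(m,n) under the action of S_n × S_m given by (σ,τ)·f = σ ∘ f ∘ τ⁻¹, onto the set Part(m,n) of partitions of m into n parts. -/
/-!
Two maps into the same type differ by a bijection of their (finite) domains exactly when
corresponding fibers have equal sizes: glue arbitrary bijections between the fibers. If two
surjections have the same multiset of fiber sizes, a permutation `σ` of `Fin n` matches these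
sizes pointwise, and gluing then yields `τ` with `g ∘ τ = σ ∘ f`. Conversely, a partition
`(c i)ᵢ` of `m` is the fiber-size profile of `Sigma.fst : (Σ i, Fin (c i)) → Fin n`,
transported to `Fin m`.
-/

/-- The multiset of fiber cardinalities of a map `f : Fin a → Fin b`. -/
def proj {a b : ℕ} (f : Fin a → Fin b) : Multiset ℕ :=
  Multiset.map (fun i : Fin b => (Finset.univ.filter fun j => f j = i).card)
    (Finset.univ : Finset (Fin b)).val

/-- The orbit relation on the set `Surj(m,n)` of surjections `Fin m → Fin n` for the
action of `S_n × S_m` given by `(σ, τ) · f = σ ∘ f ∘ τ⁻¹`. -/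
def SurjRel (m n : ℕ) (f g : {f : Fin m → Fin n // Function.Surjective f}) : Prop :=
  ∃ (σ : Equiv.Perm (Fin n)) (τ : Equiv.Perm (Fin m)), (g : Fin m → Fin n) = ⇑σ ∘ (f : Fin m → Fin n) ∘ ⇑τ⁻¹

section Fibers

variable {α α' β β' : Type*} [Fintype α] [Fintype α'] [DecidableEq β] [DecidableEq β']

theorem Fintype.card_fiber_comp_equiv (τ : α' ≃ α) (f : α → β) (i : β) :
    Fintype.card {x // f (τ x) = i} = Fintype.card {x // f x = i} :=
  Fintype.card_congr (τ.subtypeEquiv fun _ => Iff.rfl)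

theorem Fintype.card_fiber_equiv_comp (e : β ≃ β') (f : α → β) (i : β') :
    Fintype.card {x // e (f x) = i} = Fintype.card {x // f x = e.symm i} :=
  Fintype.card_congr (Equiv.subtypeEquivRight fun _ => e.eq_symm_apply.symm)

theorem exists_equiv_comp_eq_of_card_fiber_eq (f : α → β) (g : α' → β)
    (h : ∀ i, Fintype.card {x // f x = i} = Fintype.card {x // g x = i}) :
    ∃ τ : α ≃ α', ∀ x, g (τ x) = f x :=
  ⟨Equiv.ofFiberEquiv fun i => Fintype.equivOfCardEq (h i), Equiv.ofFiberEquiv_map _⟩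

theorem exists_card_fiber_eq [Fintype β] (c : β → ℕ) (hc : ∑ i, c i = Fintype.card α) :
    ∃ f : α → β, ∀ i, Fintype.card {x // f x = i} = c i := by
  have e : α ≃ Σ i, Fin (c i) := Fintype.equivOfCardEq (by simp [hc])
  refine ⟨fun x => (e x).1, fun i => ?_⟩
  rw [Fintype.card_congr ((e.subtypeEquiv fun _ => Iff.rfl).trans (Equiv.sigmaSubtype i)),
    Fintype.card_fin]

end Fibers

theorem Multiset.exists_equiv_comp_eq_of_map_univ_eq {ι α : Type*} [Fintype ι] [DecidableEq α]
    {u v : ι → α} (h : Multiset.map u Finset.univ.val = Multiset.map v Finset.univ.val) :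
    ∃ σ : ι ≃ ι, ∀ i, v (σ i) = u i := by
  refine exists_equiv_comp_eq_of_card_fiber_eq u v fun a => ?_
  have := congrArg (Multiset.count a) h
  simp only [Multiset.count_map] at this
  simp only [Fintype.card_subtype, @eq_comm _ _ a]
  exact this

theorem Multiset.exists_fin_map_univ_eq {α : Type*} {n : ℕ} (μ : Multiset α)
    (hμ : Multiset.card μ = n) : ∃ c : Fin n → α, Multiset.map c Finset.univ.val = μ := by
  obtain ⟨l, rfl⟩ : ∃ l : List α, (l : Multiset α) = μ := Quotient.exists_rep μ
  obtain rfl : l.length = n := hμ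
  exact ⟨l.get, by rw [Fin.univ_val_map, List.ofFn_get]⟩

abbrev Surj (m n : ℕ) := {f : Fin m → Fin n // Function.Surjective f}

abbrev Partitions (m n : ℕ) :=
  {μ : Multiset ℕ // Multiset.card μ = n ∧ μ.sum = m ∧ ∀ x ∈ μ, 0 < x}

section Proj

variable {m n : ℕ}

theorem proj_eq_map_card_fiber (f : Fin m → Fin n) :
    proj f = Multiset.map (fun i => Fintype.card {j // f j = i}) Finset.univ.val := by
  simp only [proj, Fintype.card_subtype]

theorem proj_perm_comp_perm (f : Fin m → Fin n) (σ : Equiv.Perm (Fin n))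
    (τ : Equiv.Perm (Fin m)) : proj (⇑σ ∘ f ∘ ⇑τ⁻¹) = proj f := by
  simp only [proj_eq_map_card_fiber, Function.comp_apply, Fintype.card_fiber_equiv_comp σ,
    Fintype.card_fiber_comp_equiv τ⁻¹ f]
  conv_rhs => rw [← Multiset.map_univ_val_equiv σ.symm, Multiset.map_map]
  rfl

theorem card_proj (f : Fin m → Fin n) : Multiset.card (proj f) = n := by
  simp [proj]

theorem sum_proj (f : Fin m → Fin n) : (proj f).sum = m := by
  change ∑ i, _ = m
  rw [← Finset.card_eq_sum_card_fiberwise fun j _ => Finset.mem_univ (f j), Finset.card_univ,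
    Fintype.card_fin]

theorem pos_of_mem_proj {f : Fin m → Fin n} (hf : Function.Surjective f) {x : ℕ}
    (hx : x ∈ proj f) : 0 < x := by
  obtain ⟨i, -, rfl⟩ := Multiset.mem_map.mp hx
  obtain ⟨j, rfl⟩ := hf i
  exact Finset.card_pos.mpr ⟨j, by simp⟩

def projOrbit : Quot (SurjRel m n) → Partitions m n :=
  Quot.lift (fun f => ⟨proj f.1, card_proj f.1, sum_proj f.1, fun _ => pos_of_mem_proj f.2⟩)
    (by rintro f g ⟨σ, τ, hg⟩; ext1; simp only [hg, proj_perm_comp_perm])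

theorem surjRel_of_proj_eq {f g : Surj m n} (h : proj f.1 = proj g.1) : SurjRel m n f g := by
  rw [proj_eq_map_card_fiber, proj_eq_map_card_fiber] at h
  obtain ⟨σ, hσ⟩ := Multiset.exists_equiv_comp_eq_of_map_univ_eq h
  obtain ⟨τ, hτ⟩ := exists_equiv_comp_eq_of_card_fiber_eq (σ ∘ f.1) g.1 fun i => by
    rw [Function.comp_def, Fintype.card_fiber_equiv_comp, ← hσ, Equiv.apply_symm_apply]
  refine ⟨σ, τ, funext fun x => ?_⟩
  simpa using hτ (τ⁻¹ x)

theorem projOrbit_injective : Function.Injective (projOrbit (m := m) (n := n)) := by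
  rintro ⟨f⟩ ⟨g⟩ h
  exact Quot.sound (surjRel_of_proj_eq (congrArg Subtype.val h))

theorem exists_surjective_proj_eq (μ : Partitions m n) : ∃ f : Surj m n, proj f.1 = μ.1 := by
  obtain ⟨μ, hcard, hsum, hpos⟩ := μ
  obtain ⟨c, rfl⟩ := Multiset.exists_fin_map_univ_eq μ hcard
  obtain ⟨f, hf⟩ := exists_card_fiber_eq (α := Fin m) c (by rw [Fintype.card_fin]; exact hsum)
  have hsurj : Function.Surjective f := fun i => by
    obtain ⟨⟨j, rfl⟩⟩ : Nonempty {j // f j = i} := by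
      rw [← Fintype.card_pos_iff, hf]
      exact hpos _ (Multiset.mem_map_of_mem c (Finset.mem_univ i))
    exact ⟨j, rfl⟩
  exact ⟨⟨f, hsurj⟩, by simp only [proj_eq_map_card_fiber, hf]⟩

theorem projOrbit_surjective : Function.Surjective (projOrbit (m := m) (n := n)) := fun μ =>
  let ⟨f, hf⟩ := exists_surjective_proj_eq μ
  ⟨Quot.mk _ f, Subtype.ext hf⟩

end Proj

/-- `proj` induces a bijection from the set of orbits of `Surj(m,n)` under
the `S_n × S_m`-action onto the set `Part(m,n)` of partitions of `m` into `n` parts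
(multisets of `n` positive integers with sum `m`). -/
theorem stmt3 (m n : ℕ) :
    ∃ e : Quot (SurjRel m n) ≃
        {μ : Multiset ℕ // Multiset.card μ = n ∧ μ.sum = m ∧ ∀ x ∈ μ, 0 < x},
      ∀ f : {f : Fin m → Fin n // Function.Surjective f},
        (e (Quot.mk (SurjRel m n) f) : Multiset ℕ) = proj (f : Fin m → Fin n) :=
  ⟨Equiv.ofBijective projOrbit ⟨projOrbit_injective, projOrbit_surjective⟩, fun _ => rfl⟩
end

section
/- Let p₁,…,p_n be positive integers and let σ be a permutation of {1,…,n}. Then κ(p_{σ⁻¹(1)}, …, p_{σ⁻¹(n)}) ≡ κ(p₁,…,p_n) + Σ_{i=1}^n p_i (σ(i) − i) (mod 2). -/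
/-- `κ(p₁,…,pₙ) = Σ_{j} (p_j − 1)(Σ_{k<j} p_k)` for a sequence indexed by `Fin n`. -/
def kappaF {n : ℕ} (p : Fin n → ℕ) : ℤ :=
  ∑ j : Fin n, ((p j : ℤ) - 1) * ∑ k ∈ Finset.Iio j, (p k : ℤ)

/-!
Expanding `κ(p) = Σ_{k<j} p_j p_k - Σ_{k<j} p_k` splits it into a quadratic part, which is
symmetric in the `p_i` and hence invariant under reordering, and a linear part
`Σ_k #{j > k} p_k`. Moving `p_i` from position `i` to position `σ(i)` changes its weight
`#{j > i} = n - 1 - i` by `i - σ(i)`, so in fact the identity holds over `ℤ`, not only mod 2.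
-/

open Finset

section
variable {ι : Type*} [Fintype ι] [LinearOrder ι] [LocallyFiniteOrderBot ι]
  [LocallyFiniteOrderTop ι]

theorem sum_sum_Iio_comm {M : Type*} [AddCommMonoid M] (f : ι → ι → M) :
    ∑ j, ∑ k ∈ Iio j, f j k = ∑ k, ∑ j ∈ Ioi k, f j k :=
  sum_comm' fun j k => by simp

theorem sum_sum_Iio_eq_sum_card_Ioi_smul {M : Type*} [AddCommMonoid M] (g : ι → M) :
    ∑ j, ∑ k ∈ Iio j, g k = ∑ k, #(Ioi k) • g k := by
  rw [sum_sum_Iio_comm (fun _ k => g k)]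
  simp only [sum_const]

theorem sum_eq_sum_Iio_add_add_sum_Ioi {M : Type*} [AddCommMonoid M] (f : ι → M) (j : ι) :
    ∑ k, f k = ∑ k ∈ Iio j, f k + f j + ∑ k ∈ Ioi j, f k := by
  classical
  rw [Fintype.sum_eq_sum_compl_add j, ← Ioi_disjUnion_Iio, sum_disjUnion]
  abel

theorem two_mul_sum_sum_Iio_mul {R : Type*} [CommRing R] (f : ι → R) :
    2 * ∑ j, ∑ k ∈ Iio j, f j * f k = (∑ i, f i) ^ 2 - ∑ i, f i ^ 2 := by
  have hupper : ∑ j, ∑ k ∈ Ioi j, f j * f k = ∑ j, ∑ k ∈ Iio j, f j * f k := by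
    rw [sum_sum_Iio_comm (fun j k => f j * f k)]
    simp only [mul_comm]
  rw [sq, sum_mul_sum,
    sum_congr rfl fun j _ => sum_eq_sum_Iio_add_add_sum_Ioi (fun k => f j * f k) j]
  simp only [sum_add_distrib, hupper, ← sq]
  ring

theorem sum_sum_Iio_mul_comp_perm {R : Type*} [CommRing R] [IsDomain R] [CharZero R]
    (f : ι → R) (σ : Equiv.Perm ι) :
    ∑ j, ∑ k ∈ Iio j, f (σ j) * f (σ k) = ∑ j, ∑ k ∈ Iio j, f j * f k := by
  refine mul_left_cancel₀ two_ne_zero ?_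
  have hcomp := two_mul_sum_sum_Iio_mul (f ∘ σ)
  simp only [Function.comp_apply] at hcomp
  rw [hcomp, two_mul_sum_sum_Iio_mul f, Equiv.sum_comp σ f, Equiv.sum_comp σ (f · ^ 2)]

end

theorem kappaF_eq_sub {n : ℕ} (p : Fin n → ℕ) :
    kappaF p = ∑ j, ∑ k ∈ Iio j, (p j : ℤ) * p k - ∑ k, ((n : ℤ) - 1 - k) * p k := by
  have hweight (k : Fin n) : (#(Ioi k) : ℤ) = n - 1 - k := by
    have := k.isLt
    rw [Fin.card_Ioi]
    omega
  simp only [← hweight, ← nsmul_eq_mul, ← sum_sum_Iio_eq_sum_card_Ioi_smul, ← sum_sub_distrib,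
    kappaF, sub_one_mul, mul_sum]

theorem kappaF_comp_perm_inv {n : ℕ} (p : Fin n → ℕ) (σ : Equiv.Perm (Fin n)) :
    kappaF (fun j => p (σ⁻¹ j)) =
      kappaF p + ∑ i : Fin n, (p i : ℤ) * (((σ i : ℕ) : ℤ) - ((i : ℕ) : ℤ)) := by
  have hlinear : ∑ k, ((n : ℤ) - 1 - k) * p (σ⁻¹ k) = ∑ i, ((n : ℤ) - 1 - σ i) * p i :=
    (Equiv.sum_comp σ fun k => ((n : ℤ) - 1 - k) * p (σ⁻¹ k)).symm.trans (by simp)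
  rw [kappaF_eq_sub, kappaF_eq_sub, hlinear,
    sum_sum_Iio_mul_comp_perm (fun i => (p i : ℤ)) σ⁻¹, sub_add]
  congr 1
  rw [← sum_sub_distrib]
  exact sum_congr rfl fun i _ => by ring

theorem stmt5_general {n : ℕ} (p : Fin n → ℕ) (σ : Equiv.Perm (Fin n)) :
    kappaF (fun j => p (σ⁻¹ j)) ≡
      kappaF p + ∑ i : Fin n, (p i : ℤ) * (((σ i : ℕ) : ℤ) - ((i : ℕ) : ℤ)) [ZMOD 2] := by
  rw [kappaF_comp_perm_inv]

/-- for positive integers `p₁,…,pₙ` and a permutation `σ` of the index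
set, `κ(p_{σ⁻¹(1)}, …, p_{σ⁻¹(n)}) ≡ κ(p₁,…,pₙ) + Σ_i p_i (σ(i) − i) (mod 2)`. -/
theorem stmt5 {n : ℕ} (p : Fin n → ℕ) (hp : ∀ i, 0 < p i) (σ : Equiv.Perm (Fin n)) :
    kappaF (fun j => p (σ⁻¹ j)) ≡
      kappaF p + ∑ i : Fin n, (p i : ℤ) * (((σ i : ℕ) : ℤ) - ((i : ℕ) : ℤ)) [ZMOD 2] :=
  stmt5_general p σ
end

section
/- Let f, f' ∈ Surj(m,n) with proj(f) = proj(f') and g, g' ∈ Surj(l,m) with proj(g) = proj(g'). Then the multiset {proj(f ∘ σ ∘ g) : σ ∈ S_m} equals the multiset {proj(f' ∘ σ ∘ g') : σ ∈ S_m}, where σ ranges over all permutations of {1,…,m} counted once each. -/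
theorem exists_equiv_comp_eq_of_card_fiber_eq_s9 {α β γ : Type*} [Finite α] [Finite β]
    {f : α → γ} {g : β → γ} (h : ∀ c, Nat.card {a // f a = c} = Nat.card {b // g b = c}) :
    ∃ e : α ≃ β, g ∘ e = f :=
  ⟨.ofFiberEquiv fun c => (Finite.card_eq.mp (h c)).some, funext (Equiv.ofFiberEquiv_map _)⟩

theorem card_fiber_eq_of_map_univ_eq {α β : Type*} [Fintype α] [DecidableEq β] {f g : α → β}
    (h : Multiset.map f Finset.univ.val = Multiset.map g Finset.univ.val) (b : β) :
    Nat.card {a // f a = b} = Nat.card {a // g a = b} := by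
  have := congrArg (Multiset.count b) h
  simp only [Multiset.count_map, Nat.card_eq_fintype_card, Fintype.card_subtype, Finset.card_def,
    Finset.filter_val] at this ⊢
  simpa only [eq_comm] using this

theorem proj_comp_perm {a b : ℕ} (f : Fin a → Fin b) (d : Equiv.Perm (Fin a)) :
    proj (f ∘ d) = proj f := by
  refine Multiset.map_congr rfl fun i _ => ?_
  simp only [← Fintype.card_subtype]
  exact Fintype.card_congr (d.subtypeEquiv fun _ => Iff.rfl)

theorem proj_perm_comp {a b : ℕ} (e : Equiv.Perm (Fin b)) (f : Fin a → Fin b) :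
    proj (e ∘ f) = proj f := by
  unfold proj
  conv_lhs => rw [← Multiset.map_univ_val_equiv e, Multiset.map_map]
  refine Multiset.map_congr rfl fun i _ => ?_
  simp only [Function.comp_apply, e.apply_eq_iff_eq]

theorem proj_eq_proj_iff {a b : ℕ} {f f' : Fin a → Fin b} :
    proj f = proj f' ↔ ∃ (e : Equiv.Perm (Fin b)) (d : Equiv.Perm (Fin a)), f' = e ∘ f ∘ d := by
  refine ⟨fun h => ?_, ?_⟩
  · obtain ⟨e, he⟩ := exists_equiv_comp_eq_of_card_fiber_eq_s9 (card_fiber_eq_of_map_univ_eq h)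
    obtain ⟨d, hd⟩ := exists_equiv_comp_eq_of_card_fiber_eq_s9 (f := e ∘ f) (g := f') fun i => by
      have hi := congrFun he (e.symm i)
      simp only [Function.comp_apply, Equiv.apply_symm_apply] at hi
      simp only [Nat.card_eq_fintype_card, Fintype.card_subtype, Function.comp_apply,
        ← e.eq_symm_apply]
      exact hi.symm
    refine ⟨e, d.symm, ?_⟩
    rw [← Function.comp_assoc, ← hd]
    ext x
    simp
  · rintro ⟨e, d, rfl⟩
    rw [proj_perm_comp, proj_comp_perm]

theorem stmt9_general {l m n : ℕ}
    (f f' : Fin m → Fin n)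
    (hff' : proj f = proj f')
    (g g' : Fin l → Fin m)
    (hgg' : proj g = proj g') :
    Multiset.map (fun σ : Equiv.Perm (Fin m) => proj (f ∘ ⇑σ ∘ g))
        (Finset.univ : Finset (Equiv.Perm (Fin m))).val =
      Multiset.map (fun σ : Equiv.Perm (Fin m) => proj (f' ∘ ⇑σ ∘ g'))
        (Finset.univ : Finset (Equiv.Perm (Fin m))).val := by
  obtain ⟨ef, df, rfl⟩ := proj_eq_proj_iff.mp hff'
  obtain ⟨eg, dg, rfl⟩ := proj_eq_proj_iff.mp hgg'
  have conj : ∀ σ : Equiv.Perm (Fin m),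
      proj ((ef ∘ f ∘ df) ∘ σ ∘ (eg ∘ g ∘ dg)) = proj (f ∘ ⇑(df * σ * eg) ∘ g) := fun σ =>
    (proj_eq_proj_iff (f := f ∘ ⇑(df * σ * eg) ∘ g).mpr ⟨ef, dg, rfl⟩).symm
  let π := (Equiv.mulRight eg).trans (Equiv.mulLeft df)
  calc _ = Multiset.map ((fun σ : Equiv.Perm (Fin m) => proj (f ∘ ⇑σ ∘ g)) ∘ π)
        (Finset.univ : Finset (Equiv.Perm (Fin m))).val := by
        rw [← Multiset.map_map, Multiset.map_univ_val_equiv]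
    _ = _ := Multiset.map_congr rfl fun σ _ => (conj σ).symm

/-- if `f, f' ∈ Surj(m,n)` have the same fiber-cardinality multiset and
`g, g' ∈ Surj(l,m)` have the same fiber-cardinality multiset, then the multisets
`{proj (f ∘ σ ∘ g) : σ ∈ S_m}` and `{proj (f' ∘ σ ∘ g') : σ ∈ S_m}` coincide. -/
theorem stmt9 {l m n : ℕ}
    (f f' : Fin m → Fin n) (hf : Function.Surjective f) (hf' : Function.Surjective f')
    (hff' : proj f = proj f')
    (g g' : Fin l → Fin m) (hg : Function.Surjective g) (hg' : Function.Surjective g')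
    (hgg' : proj g = proj g') :
    Multiset.map (fun σ : Equiv.Perm (Fin m) => proj (f ∘ ⇑σ ∘ g))
        (Finset.univ : Finset (Equiv.Perm (Fin m))).val =
      Multiset.map (fun σ : Equiv.Perm (Fin m) => proj (f' ∘ ⇑σ ∘ g'))
        (Finset.univ : Finset (Equiv.Perm (Fin m))).val :=
  stmt9_general f f' hff' g g' hgg'
end

section
/- Let λ = (λ₁ ≥ … ≥ λ_n) ∈ Part(m,n) and let (2,1^{m−1}) ∈ Part(m+1,m) be the partition of m+1 with one part equal to 2 and m−1 parts equal to 1. Then in K[Part(m+1,n)] one has δ_λ * δ_{(2,1^{m−1})} = (1/m) Σ_{i=1}^{n} λ_i · δ_{λ^{(i)}}, where λ^{(i)} is the partition of m+1 into n parts obtained from λ by replacing the part λ_i by λ_i + 1 (the sum runs over the n parts of λ counted with multiplicity). -/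
open Finset

/-- The composite `δ_{proj f} * δ_{proj g} = (1/m!) Σ_{σ ∈ S_m} δ_{proj (f∘σ∘g)}`,
for representatives `f : Fin m → Fin n` and `g : Fin l → Fin m`, with values in the
free `K`-vector space on multisets of natural numbers (in which the free vector
space `K[Part(l,n)]` on partitions embeds). -/
noncomputable def starElt (K : Type) [Field K] {l m n : ℕ}
    (f : Fin m → Fin n) (g : Fin l → Fin m) : Multiset ℕ →₀ K :=
  (m.factorial : K)⁻¹ •
    ∑ σ : Equiv.Perm (Fin m), Finsupp.single (proj (f ∘ ⇑σ ∘ g)) (1 : K)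

/-- `δ_λ * δ_μ`, defined via a choice of representatives (independent of the choice). -/
noncomputable def starOf (K : Type) [Field K] (m n l : ℕ) (lam mu : Multiset ℕ) :
    Multiset ℕ →₀ K :=
  if h : (∃ f : Fin m → Fin n, Function.Surjective f ∧ proj f = lam) ∧
      (∃ g : Fin l → Fin m, Function.Surjective g ∧ proj g = mu) then
    starElt K h.1.choose h.2.choose
  else 0

/-- The composition `* : K[Part(m,n)] × K[Part(l,m)] → K[Part(l,n)]`, as the bilinear
extension of `δ_λ * δ_μ = (1/m!) Σ_{σ ∈ S_m} δ_{proj (f∘σ∘g)}` (representatives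
`proj f = λ`, `proj g = μ`). -/
noncomputable def starComp (K : Type) [Field K] (m n l : ℕ)
    (x y : Multiset ℕ →₀ K) : Multiset ℕ →₀ K :=
  ∑ a ∈ x.support, ∑ b ∈ y.support, (x a * y b) • starOf K m n l a b

/-- The set of order-preserving surjections `Fin m → Fin n`. -/
noncomputable def OSurj (m n : ℕ) : Finset (Fin m → Fin n) :=
  open scoped Classical in
  Finset.univ.filter fun s => Monotone s ∧ Function.Surjective s

/-- `Q_{m,n}`, the uniform average of the `δ_{proj s}` over order-preserving
surjections `s : Fin m → Fin n`. -/
noncomputable def Q (K : Type) [Field K] (m n : ℕ) : Multiset ℕ →₀ K :=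
  ((OSurj m n).card : K)⁻¹ • ∑ s ∈ OSurj m n, Finsupp.single (proj s) (1 : K)

/-- `Ppart K n k = P_{n+k,n}` where `P_{n,n} = δ_{(1^n)}`,
`P_{m+1,n} = P_{m,n} * δ_{(2,1^{m-1})}` (so `P_{m,n} = P_{n+1,n} * … * P_{m,m−1}`). -/
noncomputable def Ppart (K : Type) [Field K] (n : ℕ) : ℕ → (Multiset ℕ →₀ K)
  | 0 => Finsupp.single (Multiset.replicate n 1) 1
  | k + 1 => starComp K (n + k) n (n + k + 1) (Ppart K n k)
      (Finsupp.single (2 ::ₘ Multiset.replicate (n + k - 1) 1) 1)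

/-- The monoidal product `⊙ : K[Part(m,n)] × K[Part(m',n')] → K[Part(m+m',n+n')]`,
bilinear extension of `δ_λ ⊙ δ_μ = (−1)^{(m−n)n'} Q_{m+m',n+n'}`. -/
noncomputable def odot (K : Type) [Field K] (m n m' n' : ℕ)
    (x y : Multiset ℕ →₀ K) : Multiset ℕ →₀ K :=
  ∑ a ∈ x.support, ∑ b ∈ y.support,
    (x a * y b) • ((-1 : K) ^ ((m - n) * n') • Q K (m + m') (n + n'))

/-!
Represent `(2,1^{m-1})` by a map `g` all of whose fibres are singletons except one, over `k₀`,
which has two points. Then the fibres of `f ∘ σ ∘ g` are those of `f`, except that the fibre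
over `f (σ k₀)` gains one point, so `proj (f ∘ σ ∘ g) = λ^{(i)}` where `λ_i` is the size of that
fibre. As `σ` runs over `S_m`, `σ k₀` takes every value in `Fin m` equally often, and exactly
`λ_i` of these values land in a fibre of size `λ_i`; hence the weight `λ_i / m`.
-/

open Equiv

lemma Multiset.map_univ_update {α β : Type*} [Fintype α] [DecidableEq α] [DecidableEq β]
    (F : α → β) (a : α) (b : β) :
    univ.val.map (Function.update F a b) = b ::ₘ (univ.val.map F).erase (F a) := by
  have huniv : (univ.val : Multiset α) = a ::ₘ univ.val.erase a :=
    (Multiset.cons_erase (mem_univ_val a)).symm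
  rw [huniv, Multiset.map_cons, Multiset.map_cons, Multiset.erase_cons_head,
    Function.update_self]
  congr 1
  refine Multiset.map_congr rfl fun x hx => Function.update_of_ne ?_ _ _
  exact (univ.nodup.mem_erase_iff.mp hx).1

def fiberCard {a b : ℕ} (f : Fin a → Fin b) (i : Fin b) : ℕ :=
  #{j | f j = i}

section Fibers

variable {a b c : ℕ}

lemma proj_eq_map_fiberCard (f : Fin a → Fin b) :
    proj f = univ.val.map (fiberCard f) := rfl

@[simp]
lemma fiberCard_comp_perm (f : Fin a → Fin b) (σ : Perm (Fin a)) :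
    fiberCard (f ∘ σ) = fiberCard f :=
  funext fun i => card_equiv σ (by simp)

lemma fiberCard_comp (h : Fin a → Fin b) (g : Fin c → Fin a) (i : Fin b) :
    fiberCard (h ∘ g) i = ∑ k ∈ {k | h k = i}, fiberCard g k := by
  rw [fiberCard, card_eq_sum_card_fiberwise (f := g) (t := {k | h k = i})
    fun j hj => by simpa using hj]
  refine sum_congr rfl fun k hk => ?_
  rw [filter_filter, fiberCard]
  refine congrArg card (filter_congr fun j _ => ?_)
  simp only [mem_filter, mem_univ, true_and] at hk
  simp only [Function.comp_apply, and_iff_right_iff_imp]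
  rintro rfl
  exact hk

lemma fiberCard_comp_of_fiberCard_eq_ite (h : Fin a → Fin b) {g : Fin c → Fin a} {k₀ : Fin a}
    (hg : ∀ k, fiberCard g k = if k = k₀ then 2 else 1) (i : Fin b) :
    fiberCard (h ∘ g) i = fiberCard h i + if h k₀ = i then 1 else 0 := by
  have hg' : ∀ k, fiberCard g k = 1 + if k = k₀ then 1 else 0 := fun k => by
    rw [hg]; split_ifs <;> rfl
  rw [fiberCard_comp, sum_congr rfl fun k _ => hg' k, sum_add_distrib, sum_ite_eq']
  simp [fiberCard]

lemma proj_comp_of_fiberCard_eq_ite (h : Fin a → Fin b) {g : Fin c → Fin a} {k₀ : Fin a}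
    (hg : ∀ k, fiberCard g k = if k = k₀ then 2 else 1) :
    proj (h ∘ g) = (fiberCard h (h k₀) + 1) ::ₘ (proj h).erase (fiberCard h (h k₀)) := by
  have hfib : fiberCard (h ∘ g) =
      Function.update (fiberCard h) (h k₀) (fiberCard h (h k₀) + 1) := by
    funext i
    rw [fiberCard_comp_of_fiberCard_eq_ite h hg]
    by_cases hi : i = h k₀
    · subst hi; simp
    · simp [hi, Ne.symm hi]
  rw [proj_eq_map_fiberCard, hfib, Multiset.map_univ_update, proj_eq_map_fiberCard]

lemma exists_fiberCard_eq_ite_of_proj_eq {g : Fin c → Fin a} {r : ℕ}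
    (hg : proj g = 2 ::ₘ Multiset.replicate r 1) :
    ∃ k₀, ∀ k, fiberCard g k = if k = k₀ then 2 else 1 := by
  rw [proj_eq_map_fiberCard] at hg
  obtain ⟨k₀, -, hk₀⟩ := Multiset.mem_map.mp (hg ▸ Multiset.mem_cons_self 2 _)
  refine ⟨k₀, fun k => ?_⟩
  split_ifs with hk
  · exact hk ▸ hk₀
  have hrest : (univ.val.erase k₀).map (fiberCard g) = Multiset.replicate r 1 := by
    rw [← Multiset.cons_erase (mem_univ_val k₀), Multiset.map_cons, hk₀] at hg
    exact (Multiset.cons_inj_right 2).mp hg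
  refine Multiset.eq_of_mem_replicate (hrest ▸ Multiset.mem_map_of_mem _ ?_)
  exact univ.nodup.mem_erase_iff.mpr ⟨hk, mem_univ_val k⟩

lemma sum_apply_fiberCard_apply {M : Type*} [AddCommMonoid M] (f : Fin a → Fin b) (φ : ℕ → M) :
    ∑ j, φ (fiberCard f (f j)) = ((proj f).map fun x => x • φ x).sum := by
  calc ∑ j, φ (fiberCard f (f j))
      = ∑ i, ∑ j ∈ {j | f j = i}, φ (fiberCard f (f j)) := (sum_fiberwise univ f _).symm
    _ = ∑ i, fiberCard f i • φ (fiberCard f i) := by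
        refine sum_congr rfl fun i _ => ?_
        rw [sum_congr rfl fun j hj => by rw [(mem_filter.mp hj).2], sum_const]
        rfl
    _ = ((proj f).map fun x => x • φ x).sum := by
        rw [proj_eq_map_fiberCard, Multiset.map_map]
        rfl

end Fibers

lemma card_smul_sum_perm_apply {α M : Type*} [Fintype α] [DecidableEq α] [AddCommMonoid M]
    (T : α → M) (a : α) :
    Fintype.card α • ∑ σ : Perm α, T (σ a) = (Fintype.card α).factorial • ∑ b, T b := by
  have hindep : ∀ a', ∑ σ : Perm α, T (σ a') = ∑ σ : Perm α, T (σ a) := fun a' =>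
    Fintype.sum_equiv (Equiv.mulRight (Equiv.swap a a')) _ _ fun σ => by simp
  calc Fintype.card α • ∑ σ : Perm α, T (σ a)
      = ∑ a', ∑ σ : Perm α, T (σ a') := by simp [hindep]
    _ = ∑ σ : Perm α, ∑ b, T b := by
        rw [sum_comm]; exact sum_congr rfl fun σ _ => Equiv.sum_comp σ T
    _ = (Fintype.card α).factorial • ∑ b, T b := by simp [Fintype.card_perm]

lemma exists_surjective_proj_eq_s12 {N M : ℕ} (μ : Multiset ℕ) (hcard : Multiset.card μ = N)
    (hsum : μ.sum = M) (hpos : ∀ x ∈ μ, 0 < x) :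
    ∃ f : Fin M → Fin N, Function.Surjective f ∧ proj f = μ := by
  obtain ⟨ℓ, rfl⟩ : ∃ ℓ : Fin N → ℕ, univ.val.map ℓ = μ := by
    subst hcard
    rw [← Multiset.length_toList]
    exact ⟨μ.toList.get, by rw [Fin.univ_val_map, List.ofFn_get, Multiset.coe_toList]⟩
  obtain rfl : ∑ i, ℓ i = M := hsum
  let e := (finSigmaFinEquiv (n := ℓ)).symm
  have hfib : fiberCard (fun j => (e j).1) = ℓ := funext fun i => by
    rw [fiberCard, ← Fintype.card_subtype, Fintype.card_congr
      ((e.subtypeEquiv fun _ => Iff.rfl).trans (Equiv.sigmaSubtype i)), Fintype.card_fin]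
  refine ⟨fun j => (e j).1, fun i => ?_, by rw [proj_eq_map_fiberCard, hfib]⟩
  exact ⟨e.symm ⟨i, ⟨0, hpos _ (Multiset.mem_map_of_mem _ (mem_univ_val i))⟩⟩, by simp⟩

lemma starElt_eq_of_proj_eq (K : Type) [Field K] [CharZero K] {m n : ℕ}
    (f : Fin m → Fin n) {g : Fin (m + 1) → Fin m}
    (hg : proj g = 2 ::ₘ Multiset.replicate (m - 1) 1) :
    starElt K f g = (m : K)⁻¹ • ((proj f).map fun a : ℕ =>
        (a : K) • Finsupp.single ((a + 1) ::ₘ (proj f).erase a) (1 : K)).sum := by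
  obtain ⟨k₀, hk₀⟩ := exists_fiberCard_eq_ite_of_proj_eq hg
  have hm : (m : K) ≠ 0 := Nat.cast_ne_zero.mpr (g 0).pos.ne'
  set φ : ℕ → Multiset ℕ →₀ K := fun a => Finsupp.single ((a + 1) ::ₘ (proj f).erase a) 1
  have hterm : ∀ σ : Perm (Fin m),
      Finsupp.single (proj (f ∘ σ ∘ g)) (1 : K) = φ (fiberCard f (f (σ k₀))) := fun σ => by
    rw [← Function.comp_assoc, proj_comp_of_fiberCard_eq_ite _ hk₀, proj_eq_map_fiberCard,
      fiberCard_comp_perm]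
    rfl
  have hperm : (m : K) • ∑ σ : Perm (Fin m), φ (fiberCard f (f (σ k₀))) =
      (m.factorial : K) • ∑ j, φ (fiberCard f (f j)) := by
    simpa only [Nat.cast_smul_eq_nsmul, Fintype.card_fin]
      using card_smul_sum_perm_apply (fun j => φ (fiberCard f (f j))) k₀
  have hfac : (m.factorial : K) ≠ 0 := Nat.cast_ne_zero.mpr m.factorial_ne_zero
  rw [starElt, sum_congr rfl fun σ _ => hterm σ, ← inv_smul_smul₀ hm (∑ σ, _), hperm,
    sum_apply_fiberCard_apply, smul_smul, smul_smul, mul_right_comm,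
    inv_mul_cancel₀ hfac, one_mul]
  simp only [φ, Nat.cast_smul_eq_nsmul]

lemma starComp_single_one_single_one (K : Type) [Field K] (m n l : ℕ) (lam mu : Multiset ℕ) :
    starComp K m n l (Finsupp.single lam 1) (Finsupp.single mu 1) = starOf K m n l lam mu := by
  simp [starComp]

theorem stmt12_general (K : Type) [Field K] [CharZero K] {m n : ℕ}
    (lam : Multiset ℕ) (hcard : Multiset.card lam = n) (hsum : lam.sum = m)
    (hpos : ∀ x ∈ lam, 0 < x) :
    starComp K m n (m + 1) (Finsupp.single lam 1)
        (Finsupp.single (2 ::ₘ Multiset.replicate (m - 1) 1) 1) =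
      (m : K)⁻¹ •
        (lam.map fun a : ℕ =>
          (a : K) • Finsupp.single ((a + 1) ::ₘ lam.erase a) (1 : K)).sum := by
  rw [starComp_single_one_single_one, starOf]
  obtain rfl | hm := Nat.eq_zero_or_pos m
  -- for `m = 0` no `g : Fin 1 → Fin 0` exists, and the right side vanishes as `(0 : K)⁻¹ = 0`
  · rw [dif_neg fun h => (h.2.choose 0).elim0, Nat.cast_zero, inv_zero, zero_smul]
  have hf := exists_surjective_proj_eq_s12 lam hcard hsum hpos
  have hg : ∃ g : Fin (m + 1) → Fin m, Function.Surjective g ∧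
      proj g = 2 ::ₘ Multiset.replicate (m - 1) 1 :=
    exists_surjective_proj_eq_s12 _ (by simp; omega) (by simp; omega)
      (by simp +contextual [Multiset.mem_replicate])
  rw [dif_pos ⟨hf, hg⟩, starElt_eq_of_proj_eq K _ hg.choose_spec.2, hf.choose_spec.2]

/-- for `λ = (λ₁ ≥ … ≥ λₙ) ∈ Part(m,n)` (a multiset `lam` of `n`
positive integers with sum `m`) and the partition `(2,1^{m−1}) ∈ Part(m+1,m)`,
the composite `δ_λ * δ_{(2,1^{m−1})}` equals `(1/m) Σ_{i=1}^n λ_i δ_{λ^{(i)}}`,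
where `λ^{(i)}` replaces the part `λ_i` of `λ` by `λ_i + 1`, the sum running over
the parts of `λ` counted with multiplicity. -/
theorem stmt12 (K : Type) [Field K] [CharZero K] {m n : ℕ} (hn : 1 ≤ n)
    (lam : Multiset ℕ) (hcard : Multiset.card lam = n) (hsum : lam.sum = m)
    (hpos : ∀ x ∈ lam, 0 < x) :
    starComp K m n (m + 1) (Finsupp.single lam 1)
        (Finsupp.single (2 ::ₘ Multiset.replicate (m - 1) 1) 1) =
      (m : K)⁻¹ •
        (lam.map fun a : ℕ =>
          (a : K) • Finsupp.single ((a + 1) ::ₘ lam.erase a) (1 : K)).sum :=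
  stmt12_general K lam hcard hsum hpos
end

section
/- The monoidal product ⊙ is symmetric up to the Koszul sign via the symmetry elements s_{m,m'} := (−1)^{mm'} δ_{(1^{m+m'})}: for λ ∈ Part(m,n) and μ ∈ Part(m',n'), one has (−1)^{(m−n)(m'−n')} (δ_μ ⊙ δ_λ) * s_{m,m'} = s_{n,n'} * (δ_λ ⊙ δ_μ), and both sides equal (−1)^{mn'} Q_{m+m', n+n'} in K[Part(m+m', n+n')]. -/
open Finset

section Aux

variable (K : Type) [Field K] [CharZero K]

lemma proj_id (N : ℕ) : proj (id : Fin N → Fin N) = Multiset.replicate N 1 := by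
  unfold proj
  have h : ∀ i : Fin N, ((Finset.univ.filter fun j => (id j : Fin N) = i).card) = 1 := by
    intro i; simp [Finset.filter_eq']
  rw [Multiset.map_congr rfl (fun i _ => h i), Multiset.map_const']
  simp

lemma proj_comp_equiv_right {a a' b : ℕ} (f : Fin a → Fin b) (e : Fin a' ≃ Fin a) :
    proj (f ∘ ⇑e) = proj f := by
  unfold proj
  apply Multiset.map_congr rfl
  intro i _
  rw [← Fintype.card_subtype, ← Fintype.card_subtype]
  exact Fintype.card_congr (e.subtypeEquiv (fun j => Iff.rfl))

lemma proj_equiv_left_comp {a b : ℕ} (f : Fin a → Fin b) (e : Fin b ≃ Fin b) :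
    proj (⇑e ∘ f) = proj f := by
  unfold proj
  have h1 : (Finset.univ : Finset (Fin b)).val = (Finset.univ : Finset (Fin b)).val.map ⇑e.symm := by
    conv_lhs => rw [← Finset.map_univ_equiv e.symm]
    rfl
  conv_rhs => rw [h1]
  rw [Multiset.map_map]
  apply Multiset.map_congr rfl
  intro i _
  simp only [Function.comp_apply]
  congr 1
  apply Finset.filter_congr
  intro j _
  constructor
  · intro h; exact e.injective (by simpa using h)
  · intro h; rw [h]; simp

lemma starElt_left_bij {N l : ℕ} (f : Fin N → Fin N) (hf : Function.Bijective f)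
    (g : Fin l → Fin N) : starElt K f g = Finsupp.single (proj g) 1 := by
  unfold starElt
  have h : ∀ σ : Equiv.Perm (Fin N), proj (f ∘ ⇑σ ∘ g) = proj g := by
    intro σ
    exact proj_equiv_left_comp g (Equiv.ofBijective (f ∘ ⇑σ) (hf.comp σ.bijective))
  rw [Finset.sum_congr rfl (fun σ _ => by rw [h σ])]
  rw [Finset.sum_const, Finset.card_univ, Fintype.card_perm, Fintype.card_fin]
  rw [← Nat.cast_smul_eq_nsmul K, smul_smul, inv_mul_cancel₀, one_smul]
  exact_mod_cast Nat.factorial_ne_zero N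

lemma starElt_right_bij {M N : ℕ} (f : Fin M → Fin N)
    (g : Fin M → Fin M) (hg : Function.Bijective g) : starElt K f g = Finsupp.single (proj f) 1 := by
  unfold starElt
  have h : ∀ σ : Equiv.Perm (Fin M), proj (f ∘ ⇑σ ∘ g) = proj f := by
    intro σ
    exact proj_comp_equiv_right f (Equiv.ofBijective (⇑σ ∘ g) (σ.bijective.comp hg))
  rw [Finset.sum_congr rfl (fun σ _ => by rw [h σ])]
  rw [Finset.sum_const, Finset.card_univ, Fintype.card_perm, Fintype.card_fin]
  rw [← Nat.cast_smul_eq_nsmul K, smul_smul, inv_mul_cancel₀, one_smul]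
  exact_mod_cast Nat.factorial_ne_zero M

lemma starOf_id_left {N l : ℕ} (b : Multiset ℕ)
    (hb : ∃ g : Fin l → Fin N, Function.Surjective g ∧ proj g = b) :
    starOf K N N l (Multiset.replicate N 1) b = Finsupp.single b 1 := by
  have hid : ∃ f : Fin N → Fin N, Function.Surjective f ∧ proj f = Multiset.replicate N 1 :=
    ⟨id, Function.surjective_id, proj_id N⟩
  rw [starOf, dif_pos (⟨hid, hb⟩ : _ ∧ _)]
  obtain ⟨hf1, -⟩ := (⟨hid, hb⟩ : _ ∧ _).1.choose_spec
  obtain ⟨-, hg2⟩ := (⟨hid, hb⟩ : _ ∧ _).2.choose_spec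
  rw [starElt_left_bij K _ hf1.bijective_of_finite, hg2]

lemma starOf_id_right {M N : ℕ} (a : Multiset ℕ)
    (ha : ∃ f : Fin M → Fin N, Function.Surjective f ∧ proj f = a) :
    starOf K M N M a (Multiset.replicate M 1) = Finsupp.single a 1 := by
  have hid : ∃ g : Fin M → Fin M, Function.Surjective g ∧ proj g = Multiset.replicate M 1 :=
    ⟨id, Function.surjective_id, proj_id M⟩
  rw [starOf, dif_pos (⟨ha, hid⟩ : _ ∧ _)]
  obtain ⟨-, hf2⟩ := (⟨ha, hid⟩ : _ ∧ _).1.choose_spec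
  obtain ⟨hg1, -⟩ := (⟨ha, hid⟩ : _ ∧ _).2.choose_spec
  rw [starElt_right_bij K _ _ hg1.bijective_of_finite, hf2]

lemma starComp_id_left (c : K) (hc : c ≠ 0) {N l : ℕ} (y : Multiset ℕ →₀ K)
    (hy : ∀ b ∈ y.support, ∃ g : Fin l → Fin N, Function.Surjective g ∧ proj g = b) :
    starComp K N N l (c • Finsupp.single (Multiset.replicate N 1) 1) y = c • y := by
  unfold starComp
  rw [Finsupp.support_smul_eq hc, Finsupp.support_single_ne_zero _ one_ne_zero,
    Finset.sum_singleton]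
  have h : ∀ b ∈ y.support,
      ((c • Finsupp.single (Multiset.replicate N 1) (1 : K)) (Multiset.replicate N 1) * y b) •
        starOf K N N l (Multiset.replicate N 1) b = c • Finsupp.single b (y b) := by
    intro b hb
    rw [starOf_id_left K b (hy b hb)]
    simp [Finsupp.smul_single, smul_smul, mul_comm]
  rw [Finset.sum_congr rfl h, ← Finset.smul_sum]
  congr 1
  exact Finsupp.sum_single y

lemma starComp_id_right (c : K) (hc : c ≠ 0) {M N : ℕ} (x : Multiset ℕ →₀ K)
    (hx : ∀ a ∈ x.support, ∃ f : Fin M → Fin N, Function.Surjective f ∧ proj f = a) :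
    starComp K M N M x (c • Finsupp.single (Multiset.replicate M 1) 1) = c • x := by
  unfold starComp
  rw [Finsupp.support_smul_eq hc, Finsupp.support_single_ne_zero _ one_ne_zero]
  have h : ∀ a ∈ x.support,
      (∑ b ∈ {Multiset.replicate M 1},
        (x a * (c • Finsupp.single (Multiset.replicate M 1) (1 : K)) b) • starOf K M N M a b)
        = c • Finsupp.single a (x a) := by
    intro a ha
    rw [Finset.sum_singleton, starOf_id_right K a (hx a ha)]
    simp [Finsupp.smul_single, smul_smul, mul_comm]
  rw [Finset.sum_congr rfl h, ← Finset.smul_sum]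
  congr 1
  exact Finsupp.sum_single x

lemma Q_support_rep {M N : ℕ} {b : Multiset ℕ} (hb : b ∈ (Q K M N).support) :
    ∃ g : Fin M → Fin N, Function.Surjective g ∧ proj g = b := by
  unfold Q at hb
  have hb1 := Finsupp.support_smul hb
  have hb2 := Finsupp.support_finset_sum hb1
  rw [Finset.mem_biUnion] at hb2
  obtain ⟨s, hs, hbs⟩ := hb2
  rw [Finsupp.support_single_ne_zero _ one_ne_zero, Finset.mem_singleton] at hbs
  unfold OSurj at hs
  rw [Finset.mem_filter] at hs
  exact ⟨s, hs.2.2, hbs.symm⟩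

lemma odot_single_single (M N M' N' : ℕ) (α β : Multiset ℕ) :
    odot K M N M' N' (Finsupp.single α 1) (Finsupp.single β 1)
      = (-1 : K) ^ ((M - N) * N') • Q K (M + M') (N + N') := by
  unfold odot
  rw [Finsupp.support_single_ne_zero _ one_ne_zero, Finsupp.support_single_ne_zero _ one_ne_zero]
  simp

end Aux

/-- symmetry of `⊙` up to Koszul sign via the symmetry elements
`s_{m,m'} = (−1)^{mm'} δ_{(1^{m+m'})}`: for `λ ∈ Part(m,n)` and `μ ∈ Part(m',n')`,
`(−1)^{(m−n)(m'−n')} (δ_μ ⊙ δ_λ) * s_{m,m'} = s_{n,n'} * (δ_λ ⊙ δ_μ)`, and both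
sides equal `(−1)^{mn'} Q_{m+m', n+n'}`. -/
theorem stmt16 (K : Type) [Field K] [CharZero K] {m n m' n' : ℕ}
    (lam mu : Multiset ℕ)
    (hlam : Multiset.card lam = n ∧ lam.sum = m ∧ ∀ x ∈ lam, 0 < x)
    (hmu : Multiset.card mu = n' ∧ mu.sum = m' ∧ ∀ x ∈ mu, 0 < x) :
    (-1 : K) ^ ((m - n) * (m' - n')) •
        starComp K (m + m') (n + n') (m + m')
          (odot K m' n' m n (Finsupp.single mu 1) (Finsupp.single lam 1))
          ((-1 : K) ^ (m * m') • Finsupp.single (Multiset.replicate (m + m') 1) (1 : K)) =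
      starComp K (n + n') (n + n') (m + m')
        ((-1 : K) ^ (n * n') • Finsupp.single (Multiset.replicate (n + n') 1) (1 : K))
        (odot K m n m' n' (Finsupp.single lam 1) (Finsupp.single mu 1)) ∧
    starComp K (n + n') (n + n') (m + m')
        ((-1 : K) ^ (n * n') • Finsupp.single (Multiset.replicate (n + n') 1) (1 : K))
        (odot K m n m' n' (Finsupp.single lam 1) (Finsupp.single mu 1)) =
      (-1 : K) ^ (m * n') • Q K (m + m') (n + n') := by
  have h1 : n ≤ m := by
    have := Multiset.card_nsmul_le_sum (s := lam) (a := 1) (fun x hx => hlam.2.2 x hx)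
    simpa [hlam.1, hlam.2.1] using this
  have h2 : n' ≤ m' := by
    have := Multiset.card_nsmul_le_sum (s := mu) (a := 1) (fun x hx => hmu.2.2 x hx)
    simpa [hmu.1, hmu.2.1] using this
  have hne : ∀ k : ℕ, ((-1 : K) ^ k) ≠ 0 := fun k =>
    pow_ne_zero k (neg_ne_zero.mpr one_ne_zero)
  have hsecond :
      starComp K (n + n') (n + n') (m + m')
        ((-1 : K) ^ (n * n') • Finsupp.single (Multiset.replicate (n + n') 1) (1 : K))
        (odot K m n m' n' (Finsupp.single lam 1) (Finsupp.single mu 1)) =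
      (-1 : K) ^ (m * n') • Q K (m + m') (n + n') := by
    rw [odot_single_single,
      starComp_id_left K _ (hne _) _ (fun b hb => Q_support_rep K (Finsupp.support_smul hb)),
      smul_smul, ← pow_add]
    congr 2
    rw [← Nat.add_mul, Nat.add_sub_cancel' h1]
  refine ⟨?_, hsecond⟩
  rw [odot_single_single, show m' + m = m + m' from Nat.add_comm m' m,
    show n' + n = n + n' from Nat.add_comm n' n,
    starComp_id_right K _ (hne _) _ (fun a ha => Q_support_rep K (Finsupp.support_smul ha)),
    hsecond, smul_smul, smul_smul, ← pow_add, ← pow_add]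
  congr 1
  obtain ⟨a, rfl⟩ : ∃ a, m = n + a := ⟨m - n, (Nat.add_sub_cancel' h1).symm⟩
  obtain ⟨b, rfl⟩ : ∃ b, m' = n' + b := ⟨m' - n', (Nat.add_sub_cancel' h2).symm⟩
  rw [Nat.add_sub_cancel_left, Nat.add_sub_cancel_left,
    show a * b + (n + a) * (n' + b) + b * n = (n + a) * n' + 2 * (a * b + n * b) from by ring,
    pow_add, pow_mul (-1 : K) 2, neg_one_sq, one_pow, mul_one]
end
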